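/- arXiv:2209.11999 — 2 statements merged into one kernel-verified Lean document; each statement's English description precedes it below -/
import Mathlib

section
/- If ‖x‖_Q = 0 for x ∈ ℝ^N, then x = 0; i.e., d·λ_max(S_x) = ‖x‖₁ implies S_x is a scalar multiple c·I of the identity, and evaluating on the vector |i j j … j⟩ (with i ≠ j) forces c = 0 and hence x = 0. -/
/-!
Fix a site `k` and a value `b`, and test `S_x` against the maximally entangled vector
`ψ = ∑ₘ |m b … b m b … b⟩` between the sites `0` and `k + 1`, all other sites being `b`.
On these `d` basis states `ω_{(0,k)} ⊗ I` has all `d²` entries equal to `1`, while for `l ≠ k`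
the projector `ω_{(0,l)} ⊗ I` has a single nonzero entry (at `m = m' = b`). Hence
`⟪ψ, ψ⟫ = d` and `⟪ψ, S_x ψ⟫ = ‖x‖₁ + (d² - 1) |x_k|`, and the Rayleigh bound
`⟪ψ, S_x ψ⟫ ≤ λ_max(S_x) ⟪ψ, ψ⟫` gives `|x_k| ≤ ‖x‖_Q` for every `k`.
-/

noncomputable section

/-- The projector `ω_{(0,k)} ⊗ I^{⊗(N-1)}` onto the unnormalized maximally
entangled state between tensor factors `0` and `k` of `(ℂ^d)^{⊗(N+1)}`. -/
def omegaI (d N : ℕ) (i : Fin N) :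
    Matrix ((Fin (N + 1)) → Fin d) ((Fin (N + 1)) → Fin d) ℝ :=
  Matrix.of fun v w =>
    if v 0 = v i.succ ∧ w 0 = w i.succ ∧ ∀ k, k ≠ 0 → k ≠ i.succ → v k = w k
    then 1 else 0

/-- `S_x = ∑ₖ |xₖ| · ω_{(0,k)} ⊗ I^{⊗(N-1)}`. -/
def Smat (d N : ℕ) (x : Fin N → ℝ) :
    Matrix ((Fin (N + 1)) → Fin d) ((Fin (N + 1)) → Fin d) ℝ :=
  ∑ i, |x i| • omegaI d N i

/-- The largest eigenvalue `λ_max(S_x)`. -/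
def lamMax (d N : ℕ) (x : Fin N → ℝ) : ℝ :=
  sSup (spectrum ℝ (Smat d N x))

/-- The `𝒬`-quantity `‖x‖_Q = (d·λ_max(S_x) - ‖x‖₁)/(d²-1)`. -/
def Qnorm (d N : ℕ) (x : Fin N → ℝ) : ℝ :=
  ((d : ℝ) * lamMax d N x - ∑ i, |x i|) / ((d : ℝ) ^ 2 - 1)

open Matrix Finset

section QuadraticForm

variable {n : Type*} [Fintype n] [DecidableEq n]

open scoped MatrixOrder in
theorem Matrix.IsHermitian.dotProduct_mulVec_le_sSup_spectrum {A : Matrix n n ℝ}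
    (hA : A.IsHermitian) (ψ : n → ℝ) :
    ψ ⬝ᵥ A *ᵥ ψ ≤ sSup (spectrum ℝ A) * (ψ ⬝ᵥ ψ) := by
  have hle : A ≤ algebraMap ℝ _ (sSup (spectrum ℝ A)) :=
    le_algebraMap_of_spectrum_le (fun _ hx => le_csSup A.finite_spectrum.bddAbove hx) hA
  simpa [Algebra.algebraMap_eq_smul_one, sub_mulVec, smul_mulVec, dotProduct_sub] using
    (Matrix.le_iff.mp hle).dotProduct_mulVec_nonneg ψ

variable {R ι : Type*} [CommSemiring R] [Fintype ι]

theorem sum_single_dotProduct_mulVec_sum_single (A : Matrix n n R) (p : ι → n) :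
    (∑ i, Pi.single (p i) (1 : R)) ⬝ᵥ A *ᵥ ∑ i, Pi.single (p i) 1
      = ∑ i, ∑ j, A (p i) (p j) := by
  simp only [mulVec_sum, dotProduct_sum, sum_dotProduct, single_dotProduct, mulVec_single,
    col_apply, MulOpposite.op_one, one_smul, one_mul]
  exact sum_comm

theorem sum_single_dotProduct_sum_single {p : ι → n} (hp : p.Injective) :
    (∑ i, Pi.single (p i) (1 : R)) ⬝ᵥ ∑ i, Pi.single (p i) 1 = Fintype.card ι := by
  classical
  simpa [one_apply, hp.eq_iff] using sum_single_dotProduct_mulVec_sum_single (1 : Matrix n n R) p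

end QuadraticForm

section PairState

variable {d N : ℕ}

def pairState (k : Fin N) (b m : Fin d) : Fin (N + 1) → Fin d :=
  fun j => if j = 0 ∨ j = k.succ then m else b

variable {k l : Fin N} {b m m' : Fin d}

@[simp] lemma pairState_zero : pairState k b m 0 = m := by simp [pairState]

@[simp] lemma pairState_succ_self : pairState k b m k.succ = m := by simp [pairState]

lemma pairState_of_ne {j : Fin (N + 1)} (h0 : j ≠ 0) (hk : j ≠ k.succ) :
    pairState k b m j = b := by simp [pairState, h0, hk]

lemma pairState_injective : Function.Injective (pairState k b) := fun m m' h => by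
  simpa using congrFun h 0

lemma omegaI_pairState_self : omegaI d N k (pairState k b m) (pairState k b m') = 1 := by
  rw [omegaI, of_apply, if_pos]
  exact ⟨by simp, by simp, fun j h0 hk => by rw [pairState_of_ne h0 hk, pairState_of_ne h0 hk]⟩

lemma omegaI_pairState_of_ne (hlk : l ≠ k) :
    omegaI d N l (pairState k b m) (pairState k b m') = if m = b ∧ m' = b then 1 else 0 := by
  have hs0 : l.succ ≠ 0 := Fin.succ_ne_zero l
  have hsk : l.succ ≠ k.succ := (Fin.succ_injective _).ne hlk
  rw [omegaI, of_apply, pairState_zero, pairState_zero, pairState_of_ne hs0 hsk,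
    pairState_of_ne hs0 hsk]
  refine if_congr ⟨fun h => ⟨h.1, h.2.1⟩, ?_⟩ rfl rfl
  rintro ⟨rfl, rfl⟩
  exact ⟨rfl, rfl, fun j _ _ => rfl⟩

lemma sum_omegaI_pairState (k l : Fin N) (b : Fin d) :
    ∑ m, ∑ m', omegaI d N l (pairState k b m) (pairState k b m')
      = if l = k then (d : ℝ) ^ 2 else 1 := by
  split_ifs with hlk
  · subst hlk
    simp [omegaI_pairState_self, sq]
  · simp [omegaI_pairState_of_ne hlk, ite_and]

end PairState

lemma smat_apply (d N : ℕ) (x : Fin N → ℝ) (v w : Fin (N + 1) → Fin d) :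
    Smat d N x v w = ∑ l, |x l| * omegaI d N l v w := by
  simp [Smat, Matrix.sum_apply]

lemma omegaI_isHermitian (d N : ℕ) (l : Fin N) : (omegaI d N l).IsHermitian := by
  refine isHermitian_iff_isSymm.mpr (IsSymm.ext fun v w => ?_)
  simp only [omegaI, of_apply]
  exact if_congr ⟨fun ⟨h, h', he⟩ => ⟨h', h, fun j h0 hl => (he j h0 hl).symm⟩,
    fun ⟨h, h', he⟩ => ⟨h', h, fun j h0 hl => (he j h0 hl).symm⟩⟩ rfl rfl

lemma smat_isHermitian (d N : ℕ) (x : Fin N → ℝ) : (Smat d N x).IsHermitian :=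
  isSelfAdjoint_sum _ fun l _ => (IsSelfAdjoint.all _).smul (omegaI_isHermitian d N l)

lemma sum_smat_pairState {d N : ℕ} (x : Fin N → ℝ) (k : Fin N) (b : Fin d) :
    ∑ m, ∑ m', Smat d N x (pairState k b m) (pairState k b m')
      = ∑ l, |x l| + ((d : ℝ) ^ 2 - 1) * |x k| := by
  calc ∑ m, ∑ m', Smat d N x (pairState k b m) (pairState k b m')
      = ∑ l, ∑ m, ∑ m', |x l| * omegaI d N l (pairState k b m) (pairState k b m') := by
        simp only [smat_apply]
        exact (sum_congr rfl fun _ _ => sum_comm).trans sum_comm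
    _ = ∑ l, |x l| * if l = k then (d : ℝ) ^ 2 else 1 := by
        simp only [← mul_sum, sum_omegaI_pairState]
    _ = ∑ l, |x l| + ((d : ℝ) ^ 2 - 1) * |x k| := by
        have hsplit (l : Fin N) : |x l| * (if l = k then (d : ℝ) ^ 2 else 1)
            = |x l| + if l = k then ((d : ℝ) ^ 2 - 1) * |x l| else 0 := by
          split_ifs <;> ring
        simp only [hsplit, sum_add_distrib, sum_ite_eq', mem_univ, if_true]

lemma sum_abs_add_mul_abs_le_mul_lamMax {d N : ℕ} [NeZero d] (x : Fin N → ℝ) (k : Fin N) :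
    ∑ l, |x l| + ((d : ℝ) ^ 2 - 1) * |x k| ≤ d * lamMax d N x := by
  have hray := (smat_isHermitian d N x).dotProduct_mulVec_le_sSup_spectrum
    (∑ m, Pi.single (pairState k 0 m) 1)
  rw [sum_single_dotProduct_mulVec_sum_single, sum_smat_pairState,
    sum_single_dotProduct_sum_single pairState_injective, Fintype.card_fin] at hray
  rw [lamMax]
  linarith

lemma abs_le_qnorm {d N : ℕ} (hd : 2 ≤ d) (x : Fin N → ℝ) (k : Fin N) : |x k| ≤ Qnorm d N x := by
  have : NeZero d := ⟨by omega⟩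
  have hd_sq : (1 : ℝ) < (d : ℝ) ^ 2 := by
    have : (2 : ℝ) ≤ d := by exact_mod_cast hd
    nlinarith
  rw [Qnorm, le_div_iff₀ (by linarith)]
  linarith [sum_abs_add_mul_abs_le_mul_lamMax (d := d) x k]

theorem stmt_12_general (d N : ℕ) (hd : 2 ≤ d)
    (x : Fin N → ℝ) (h : Qnorm d N x = 0) :
    x = 0 :=
  funext fun k => abs_nonpos_iff.mp <| (abs_le_qnorm hd x k).trans h.le

/-- if `‖x‖_Q = 0` then `x = 0` (the `𝒬`-quantity is
positive-definite). -/
theorem stmt_12 (d N : ℕ) (hd : 2 ≤ d) (hN : 1 ≤ N)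
    (x : Fin N → ℝ) (h : Qnorm d N x = 0) :
    x = 0 :=
  stmt_12_general d N hd x h

end
end

section
/- For 1 ≤ a, b ≤ N with a ≠ b, the set Σ_{a,b} = {σ ∈ S_{N+1} : σ(0) = a and σ(b) = 0} has exactly (N−1)! elements, and ∑_{σ ∈ Σ_{a,b}} d^{#σ} = (1/d) ∑_{σ ∈ Σ_{a,a}} d^{#σ}, where #σ is the number of cycles of σ. -/
/-- The number of disjoint cycles of a permutation, counting fixed points as
(trivial) cycles. -/
def numCycles {M : ℕ} (σ : Equiv.Perm (Fin M)) : ℕ :=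
  σ.cycleType.card + (Finset.univ.filter fun x => σ x = x).card

/-!
Left multiplication by any permutation with `0 ↦ a`, `b ↦ 0` identifies `Σ_{a,b}` with the
permutations fixing `0` and `b`, i.e. with the permutations of the other `N - 1` points.

For the sum, `σ ↦ σ * (a b)` maps `Σ_{a,b}` bijectively onto `Σ_{a,a}`. Since `b ↦ 0 ↦ a` under
`σ`, the points `a` and `b` lie on one cycle, and the transposition splits off the 2-cycle
`(0 a)` from it, so `#(σ * (a b)) = #σ + 1`. This splitting is a combination of three copies
of the basic move: multiplying by `(z w)` with `z` a fixed point merges `z` into the cycle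
through `w` and lowers `#` by one.
-/

open Equiv Equiv.Perm Finset
open scoped Nat

section Counting

variable {ι α : Type*} [Fintype ι] [Fintype α] [DecidableEq α]

theorem card_filter_forall_apply_eq_self {f : ι → α} (hf : Function.Injective f) :
    #{σ : Perm α | ∀ i, σ (f i) = f i} = (Fintype.card α - Fintype.card ι)! := by
  have hfix : ∀ σ : Perm α, (∀ i, σ (f i) = f i) ↔ ∀ u, ¬(u ∉ Set.range f) → σ u = u := by
    simp
  rw [← Fintype.card_subtype, Fintype.card_congr (Equiv.subtypeEquivRight hfix),
    ← Fintype.card_congr (Perm.subtypeEquivSubtypePerm _), Fintype.card_perm,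
    Fintype.card_subtype_compl, Set.card_range_of_injective hf]

theorem card_filter_forall_apply_eq {f g : ι → α} (hf : Function.Injective f)
    (hg : Function.Injective g) :
    #{σ : Perm α | ∀ i, σ (f i) = g i} = (Fintype.card α - Fintype.card ι)! := by
  obtain ⟨τ, hτ⟩ := Perm.exists_extending_pair f g hf hg
  rw [← card_filter_forall_apply_eq_self hf]
  refine card_equiv (Equiv.mulLeft τ⁻¹) fun σ => ?_
  simp [symm_apply_eq, hτ]

end Counting

namespace Equiv.Perm

variable {α : Type*} [DecidableEq α] [Fintype α]

theorem support_mul_swap_of_apply_eq_self {g : Perm α} {z w : α} (hz : g z = z) (hw : w ≠ z) :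
    (g * swap z w).support = insert z (insert w g.support) := by
  ext x
  simp only [mem_support, mem_insert, Perm.mul_apply]
  by_cases hxz : x = z
  · subst hxz
    simp only [swap_apply_left, true_or, iff_true]
    exact fun h => hw (g.injective (h.trans hz.symm))
  by_cases hxw : x = w
  · subst hxw
    simp [swap_apply_right, hz, hw, hw.symm]
  · simp [swap_apply_of_ne_of_ne hxz hxw, hxz, hxw]

theorem IsCycle.mul_swap_of_apply_eq_self {c : Perm α} (hc : c.IsCycle) {z w : α}
    (hz : c z = z) (hw : c w ≠ w) : (c * swap z w).IsCycle := by
  have hzw : z ≠ w := by rintro rfl; exact hw hz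
  set f := c * swap z w with hf
  have hfw : f w = z := by simp [hf, hz]
  have hfz : f z = c w := by simp [hf]
  have horbit : ∀ k : ℕ, f.SameCycle w ((c ^ k) w) := by
    intro k
    induction k with
    | zero => exact SameCycle.refl _ _
    | succ k ih =>
      rw [pow_succ', Perm.mul_apply]
      by_cases hk : (c ^ k) w = w
      · rw [hk, ← hfz, ← hfw]
        exact (SameCycle.refl _ _).apply_right.apply_right
      · have hkz : (c ^ k) w ≠ z := fun h =>
          hzw ((c ^ k).injective (by rw [pow_apply_eq_self_of_apply_eq_self hz, h]))
        have : f ((c ^ k) w) = c ((c ^ k) w) := by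
          simp [hf, swap_apply_of_ne_of_ne hkz hk]
        exact this ▸ ih.apply_right
  refine ⟨w, by rw [hfw]; exact hzw, fun y hy => ?_⟩
  by_cases hyz : y = z
  · exact hyz ▸ hfw ▸ (SameCycle.refl _ _).apply_right
  by_cases hyw : y = w
  · exact hyw ▸ SameCycle.refl _ _
  have hcy : c y ≠ y := by simpa [hf, swap_apply_of_ne_of_ne hyz hyw] using hy
  obtain ⟨k, rfl⟩ := hc.exists_pow_eq hw hcy
  exact horbit k

theorem card_cycleType_mul_swap_of_apply_eq_self {g : Perm α} {z w : α} (hz : g z = z)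
    (hw : w ≠ z) :
    Multiset.card (g * swap z w).cycleType =
      Multiset.card g.cycleType + if g w = w then 1 else 0 := by
  split_ifs with hgw
  · have hdisj : g.Disjoint (swap z w) := by
      rw [disjoint_iff_disjoint_support, support_swap hw.symm, disjoint_insert_right,
        disjoint_singleton_right]
      simp [hz, hgw]
    rw [hdisj.cycleType_mul, Multiset.card_add, (isCycle_swap hw.symm).cycleType]
    rfl
  · set c := g.cycleOf w
    have hcycle : c.IsCycle := isCycle_cycleOf g hgw
    have hcz : c z = z := by simp [c, cycleOf_apply, hz]
    have hcw : c w ≠ w := by rwa [cycleOf_apply_self]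
    have hdisj : (g * c⁻¹).Disjoint c := disjoint_mul_inv_of_mem_cycleFactorsFinset
      (cycleOf_mem_cycleFactorsFinset_iff.mpr (mem_support.mpr hgw))
    have hdisj' : (g * c⁻¹).Disjoint (c * swap z w) := by
      rw [disjoint_iff_disjoint_support, support_mul_swap_of_apply_eq_self hcz hw,
        insert_eq_of_mem (mem_support.mpr hcw), disjoint_insert_right]
      refine ⟨?_, disjoint_iff_disjoint_support.mp hdisj⟩
      rw [mem_support, not_not, Perm.mul_apply, inv_eq_iff_eq.mpr hcz.symm, hz]
    have hsplit : g * swap z w = g * c⁻¹ * (c * swap z w) := by group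
    rw [hsplit, hdisj'.cycleType_mul, ← inv_mul_cancel_right g c, hdisj.cycleType_mul,
      inv_mul_cancel_right, Multiset.card_add, Multiset.card_add,
      (hcycle.mul_swap_of_apply_eq_self hcz hcw).cycleType, hcycle.cycleType]
    rfl

end Equiv.Perm

section numCycles

variable {M : ℕ}

theorem numCycles_add_card_support (σ : Perm (Fin M)) :
    numCycles σ + #σ.support = Multiset.card σ.cycleType + M := by
  rw [numCycles, add_assoc, support, card_filter_add_card_filter_not, card_univ,
    Fintype.card_fin]

theorem numCycles_mul_swap_add_one {g : Perm (Fin M)} {z w : Fin M} (hz : g z = z)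
    (hw : w ≠ z) : numCycles (g * swap z w) + 1 = numCycles g := by
  have hzw : z ∉ insert w g.support := by simp [hz, hw.symm]
  have hsupp := card_insert_of_notMem hzw
  rw [← support_mul_swap_of_apply_eq_self hz hw] at hsupp
  have h₁ := numCycles_add_card_support g
  have h₂ := numCycles_add_card_support (g * swap z w)
  rw [card_cycleType_mul_swap_of_apply_eq_self hz hw] at h₂
  by_cases hgw : g w = w
  · rw [card_insert_of_notMem (by simpa using hgw)] at hsupp
    simp only [hgw, if_true] at h₂
    omega
  · rw [insert_eq_of_mem (by simpa using hgw)] at hsupp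
    simp only [hgw, if_false] at h₂
    omega

theorem numCycles_mul_swap_of_apply_eq {σ : Perm (Fin M)} {a b c : Fin M} (hab : a ≠ b)
    (hac : a ≠ c) (hbc : b ≠ c) (hb : σ b = c) (hc : σ c = a) :
    numCycles (σ * swap a b) = numCycles σ + 1 := by
  -- `k` fixes `a` and `c`, and both `σ * (a b) = k * (a c)` and `σ = k * (a b) * (c b)`.
  set k := σ * swap a b * swap a c with hk
  have hka : k a = a := by simp [hk, swap_apply_of_ne_of_ne hac.symm hbc.symm, hc]
  have hkc : k c = c := by simp [hk, hb]
  have h₁ := numCycles_mul_swap_add_one hka hac.symm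
  have h₂ := numCycles_mul_swap_add_one hka hab.symm
  have h₃ := numCycles_mul_swap_add_one (g := k * swap a b) (z := c) (w := b)
    (by simp [swap_apply_of_ne_of_ne hac.symm hbc.symm, hkc]) hbc
  have hk₁ : k * swap a c = σ * swap a b := by simp [hk, mul_assoc]
  have hk₃ : k * swap a b * swap c b = σ := by
    calc k * swap a b * swap c b = σ * (swap a b * swap c a * swap a b) * swap b c := by
          simp only [hk, swap_comm a c, swap_comm c b, mul_assoc]
      _ = σ := by
          rw [swap_mul_swap_mul_swap hac.symm hbc.symm, mul_assoc, swap_mul_self, mul_one]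
  rw [hk₁] at h₁
  rw [hk₃] at h₃
  omega

theorem sum_comp_numCycles_filter_apply_eq_and_apply_eq {β : Type*} [AddCommMonoid β]
    (F : ℕ → β) {a b c : Fin M} (hab : a ≠ b) (hac : a ≠ c) (hbc : b ≠ c) :
    ∑ σ : Perm (Fin M) with σ c = a ∧ σ a = c, F (numCycles σ)
      = ∑ σ : Perm (Fin M) with σ c = a ∧ σ b = c, F (numCycles σ + 1) := by
  refine (sum_equiv (Equiv.mulRight (swap a b)) (fun σ => ?_) fun σ hσ => ?_).symm
  · simp [swap_apply_of_ne_of_ne hac.symm hbc.symm]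
  · simp only [mem_filter, mem_univ, true_and] at hσ
    simp [numCycles_mul_swap_of_apply_eq hab hac hbc hσ.2 hσ.1]

end numCycles

open Finset in
theorem stmt_15_general (N d : ℕ) (hd : 2 ≤ d)
    (a b : Fin (N + 1)) (ha : a ≠ 0) (hb : b ≠ 0) (hab : a ≠ b) :
    ((univ.filter fun σ : Equiv.Perm (Fin (N + 1)) => σ 0 = a ∧ σ b = 0).card
        = Nat.factorial (N - 1)) ∧
    (∑ σ ∈ univ.filter
          (fun σ : Equiv.Perm (Fin (N + 1)) => σ 0 = a ∧ σ b = 0),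
        (d : ℝ) ^ numCycles σ
      = (1 / (d : ℝ)) * ∑ σ ∈ univ.filter
          (fun σ : Equiv.Perm (Fin (N + 1)) => σ 0 = a ∧ σ a = 0),
        (d : ℝ) ^ numCycles σ) := by
  constructor
  · have hinj : ∀ {x y : Fin (N + 1)}, x ≠ y → Function.Injective ![x, y] := by
      intro x y hxy i j
      fin_cases i <;> fin_cases j <;> simp [hxy, hxy.symm]
    simpa [Fin.forall_fin_two] using card_filter_forall_apply_eq (hinj hb.symm) (hinj ha)
  · have hd₀ : (d : ℝ) ≠ 0 := Nat.cast_ne_zero.mpr (by omega)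
    rw [sum_comp_numCycles_filter_apply_eq_and_apply_eq (fun n => (d : ℝ) ^ n) hab ha hb,
      mul_sum]
    refine sum_congr rfl fun σ _ => ?_
    rw [pow_succ', one_div, inv_mul_cancel_left₀ hd₀]

open Finset in
/-- For `a ≠ b` both nonzero, the set
`Σ_{a,b} = {σ ∈ S_{N+1} : σ 0 = a ∧ σ b = 0}` has `(N-1)!` elements, and
`∑_{σ ∈ Σ_{a,b}} d^{#σ} = (1/d) ∑_{σ ∈ Σ_{a,a}} d^{#σ}`. -/
theorem stmt_15 (N d : ℕ) (hN : 1 ≤ N) (hd : 2 ≤ d)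
    (a b : Fin (N + 1)) (ha : a ≠ 0) (hb : b ≠ 0) (hab : a ≠ b) :
    ((univ.filter fun σ : Equiv.Perm (Fin (N + 1)) => σ 0 = a ∧ σ b = 0).card
        = Nat.factorial (N - 1)) ∧
    (∑ σ ∈ univ.filter
          (fun σ : Equiv.Perm (Fin (N + 1)) => σ 0 = a ∧ σ b = 0),
        (d : ℝ) ^ numCycles σ
      = (1 / (d : ℝ)) * ∑ σ ∈ univ.filter
          (fun σ : Equiv.Perm (Fin (N + 1)) => σ 0 = a ∧ σ a = 0),
        (d : ℝ) ^ numCycles σ) :=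
  stmt_15_general N d hd a b ha hb hab
end
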